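/- arXiv:2209.13134 — 5 statements merged into one kernel-verified Lean document; each statement's English description precedes it below -/
import Mathlib

section
/- Let T be a finite rooted tree with n ≥ 1 nodes in which every node has at most two children (a rooted binary tree), with root u. Then the number of matchings of T that contain no edge incident to the root u is at most F_n, the n-th Fibonacci number (with F_1 = F_2 = 1). -/
/-!
In a forest, every nonempty vertex set `S` contains a vertex `v` with at most one neighbour `w`
inside `S` (the first vertex of a longest path in the induced forest). A matching within `S`
either avoids `v` or contains the edge `vw`, which gives the Fibonacci recursion
`m(S) ≤ m(S \ {v}) + m(S \ {v, w})`, hence `m(S) ≤ F (|S| + 1)`. The matchings avoiding the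
root are the matchings within the remaining `n - 1` vertices.
-/

/-- `M` is a matching of the graph `G`: a set of edges of `G` no two of which
share an endpoint (the empty set counts as a matching). -/
def IsMatchingSet {V : Type*} (G : SimpleGraph V) (M : Finset (Sym2 V)) : Prop :=
  (∀ e ∈ M, e ∈ G.edgeSet) ∧
    ∀ e ∈ M, ∀ f ∈ M, e ≠ f → ∀ v : V, ¬(v ∈ e ∧ v ∈ f)

open SimpleGraph Finset

namespace SimpleGraph

variable {V : Type*} {G : SimpleGraph V}

theorem IsAcyclic.exists_adj_subsingleton [Nonempty V] [Finite G.edgeSet] (hG : G.IsAcyclic) :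
    ∃ v, ∀ w w', G.Adj v w → G.Adj v w' → w = w' := by
  obtain ⟨u, _, p, hp, hmax⟩ := Walk.exists_isPath_forall_isPath_length_le_length G
  have hsnd : ∀ w, G.Adj u w → w = p.snd := fun w hadj ↦ by
    refine hG.eq_snd_of_adj_start hp hadj (by_contra fun hw ↦ ?_)
    have := hmax _ _ _ (hp.cons (h := hadj.symm) hw)
    simp at this
  exact ⟨u, fun w w' h h' ↦ (hsnd w h).trans (hsnd w' h').symm⟩

theorem IsAcyclic.exists_mem_adj_subsingleton (hG : G.IsAcyclic) {S : Finset V}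
    (hS : S.Nonempty) : ∃ v ∈ S, ∀ w ∈ S, ∀ w' ∈ S, G.Adj v w → G.Adj v w' → w = w' := by
  have : Nonempty (S : Set V) := hS.to_set.to_subtype
  obtain ⟨⟨v, hv⟩, hleaf⟩ := (hG.induce (S : Set V)).exists_adj_subsingleton
  exact ⟨v, hv, fun w hw w' hw' h h' ↦ congrArg Subtype.val (hleaf ⟨w, hw⟩ ⟨w', hw'⟩ h h')⟩

def matchingsIn (G : SimpleGraph V) (S : Finset V) : Set (Finset (Sym2 V)) :=
  {M | IsMatchingSet G M ∧ ∀ e ∈ M, ∀ x ∈ e, x ∈ S}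

theorem matchingsIn_empty : matchingsIn G ∅ = {∅} := by
  ext M
  simp only [matchingsIn, Set.mem_ofPred_eq, Set.mem_singleton_iff, notMem_empty]
  refine ⟨fun ⟨_, hM⟩ ↦ eq_empty_of_forall_notMem fun e he ↦ ?_, ?_⟩
  · exact hM e he _ (Sym2.out_fst_mem e)
  · rintro rfl
    exact ⟨⟨by simp, by simp⟩, by simp⟩

variable {S : Finset V} {M : Finset (Sym2 V)} {v w : V}

theorem exists_adj_of_mem_matchingsIn (hM : M ∈ matchingsIn G S) {e : Sym2 V} (he : e ∈ M)
    (hv : v ∈ e) : ∃ x ∈ S, G.Adj v x ∧ e = s(v, x) := by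
  obtain ⟨x, rfl⟩ := Sym2.mem_iff_exists.mp hv
  exact ⟨x, hM.2 _ he x (Sym2.mem_mk_right v x), hM.1.1 _ he, rfl⟩

variable [DecidableEq V]

theorem mem_matchingsIn_erase (hM : M ∈ matchingsIn G S) (hv : ∀ e ∈ M, v ∉ e) :
    M ∈ matchingsIn G (S.erase v) :=
  ⟨hM.1, fun e he x hx ↦ mem_erase.mpr ⟨fun h ↦ hv e he (h ▸ hx), hM.2 e he x hx⟩⟩

theorem erase_mem_matchingsIn_erase_erase (hM : M ∈ matchingsIn G S) (hvw : s(v, w) ∈ M) :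
    M.erase s(v, w) ∈ matchingsIn G ((S.erase v).erase w) := by
  have hsub : M.erase s(v, w) ⊆ M := erase_subset _ _
  refine ⟨⟨fun e he ↦ hM.1.1 e (hsub he), fun e he f hf ↦ hM.1.2 e (hsub he) f (hsub hf)⟩, ?_⟩
  intro e he x hx
  have hdisj := hM.1.2 e (hsub he) _ hvw (ne_of_mem_erase he) x
  simp only [Sym2.mem_iff, not_and, not_or] at hdisj
  simp only [mem_erase]
  exact ⟨(hdisj hx).2, (hdisj hx).1, hM.2 e (hsub he) x hx⟩

theorem matchingsIn_subset_erase (hv : ∀ x ∈ S, ¬G.Adj v x) :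
    matchingsIn G S ⊆ matchingsIn G (S.erase v) := fun _ hM ↦
  mem_matchingsIn_erase hM fun _ he hve ↦
    let ⟨x, hx, hadj, _⟩ := exists_adj_of_mem_matchingsIn hM he hve
    hv x hx hadj

theorem matchingsIn_subset_union (hw : ∀ x ∈ S, G.Adj v x → x = w) :
    matchingsIn G S ⊆
      matchingsIn G (S.erase v) ∪ insert s(v, w) '' matchingsIn G ((S.erase v).erase w) := by
  intro M hM
  by_cases hvw : s(v, w) ∈ M
  · exact Or.inr ⟨M.erase s(v, w), erase_mem_matchingsIn_erase_erase hM hvw, insert_erase hvw⟩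
  · refine Or.inl (mem_matchingsIn_erase hM fun e he hve ↦ hvw ?_)
    obtain ⟨x, hx, hadj, rfl⟩ := exists_adj_of_mem_matchingsIn hM he hve
    rwa [← hw x hx hadj]

theorem IsAcyclic.ncard_matchingsIn_le_fib [Finite V] (hG : G.IsAcyclic) (S : Finset V) :
    (matchingsIn G S).ncard ≤ Nat.fib (#S + 1) := by
  induction S using Finset.strongInduction with | _ S ih =>
  obtain rfl | hS := S.eq_empty_or_nonempty
  · simp [matchingsIn_empty]
  obtain ⟨v, hv, hleaf⟩ := hG.exists_mem_adj_subsingleton hS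
  by_cases hnbr : ∃ w ∈ S, G.Adj v w
  · obtain ⟨w, hwS, hadj⟩ := hnbr
    have hwS' : w ∈ S.erase v := mem_erase.mpr ⟨hadj.ne', hwS⟩
    have hssub₁ : S.erase v ⊂ S := erase_ssubset hv
    have hssub₂ : (S.erase v).erase w ⊂ S := (erase_ssubset hwS').trans hssub₁
    have hcard₁ : #(S.erase v) = #((S.erase v).erase w) + 1 := (card_erase_add_one hwS').symm
    have hcard : #S = #((S.erase v).erase w) + 2 := by
      rw [← card_erase_add_one hv, hcard₁]
    calc (matchingsIn G S).ncard
        ≤ (matchingsIn G (S.erase v) ∪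
            insert s(v, w) '' matchingsIn G ((S.erase v).erase w)).ncard :=
          Set.ncard_le_ncard (matchingsIn_subset_union fun x hx hx' ↦ hleaf x hx w hwS hx' hadj)
      _ ≤ (matchingsIn G (S.erase v)).ncard + (matchingsIn G ((S.erase v).erase w)).ncard :=
          (Set.ncard_union_le _ _).trans <|
            Nat.add_le_add_left (Set.ncard_image_le (Set.toFinite _)) _
      _ ≤ Nat.fib (#(S.erase v) + 1) + Nat.fib (#((S.erase v).erase w) + 1) :=
          Nat.add_le_add (ih _ hssub₁) (ih _ hssub₂)
      _ = Nat.fib (#S + 1) := by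
          rw [hcard₁, hcard, Nat.fib_add_two (n := #((S.erase v).erase w) + 1)]
          ring
  · push Not at hnbr
    calc (matchingsIn G S).ncard
        ≤ (matchingsIn G (S.erase v)).ncard :=
          Set.ncard_le_ncard (matchingsIn_subset_erase hnbr)
      _ ≤ Nat.fib (#(S.erase v) + 1) := ih _ (erase_ssubset hv)
      _ ≤ Nat.fib (#S + 1) := Nat.fib_mono (by simp [card_erase_of_mem hv])

end SimpleGraph

theorem matchings_avoiding_root_le_fib_general {V : Type*} [Fintype V]
    (G : SimpleGraph V) (hT : G.IsTree) (u : V)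
    (n : ℕ) (hn : Fintype.card V = n) :
    {M : Finset (Sym2 V) | IsMatchingSet G M ∧ ∀ e ∈ M, u ∉ e}.ncard ≤ Nat.fib n := by
  classical
  have hset : {M : Finset (Sym2 V) | IsMatchingSet G M ∧ ∀ e ∈ M, u ∉ e} =
      matchingsIn G (univ.erase u) := by
    ext M
    simp only [matchingsIn, Set.mem_ofPred_eq, mem_erase, mem_univ, and_true]
    exact and_congr_right fun _ ↦ ⟨fun h e he x hx hxu ↦ h e he (hxu ▸ hx),
      fun h e he hu ↦ h e he u hu rfl⟩
  have hcard : #(univ.erase u) + 1 = n := by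
    rw [card_erase_add_one (mem_univ u), card_univ, hn]
  rw [hset, ← hcard]
  exact hT.isAcyclic.ncard_matchingsIn_le_fib _

/-- Let `G` be a finite rooted tree with `n ≥ 1` nodes, rooted at `u`, in which
every node has at most two children (so the root has at most `2` neighbors and
every other node has at most `3` neighbors). Then the number of matchings of
`G` containing no edge incident to the root `u` is at most `F n`, the `n`-th
Fibonacci number (with `F 1 = F 2 = 1`). -/
theorem matchings_avoiding_root_le_fib {V : Type*} [Fintype V]
    (G : SimpleGraph V) (hT : G.IsTree) (u : V)
    (hroot : (G.neighborSet u).ncard ≤ 2)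
    (hbin : ∀ v : V, v ≠ u → (G.neighborSet v).ncard ≤ 3)
    (n : ℕ) (hn : Fintype.card V = n) (hn1 : 1 ≤ n) :
    {M : Finset (Sym2 V) | IsMatchingSet G M ∧ ∀ e ∈ M, u ∉ e}.ncard ≤ Nat.fib n :=
  matchings_avoiding_root_le_fib_general G hT u n hn
end

section
/- Let T be a finite rooted tree with n ≥ 1 nodes in which every node has at most two children (a rooted binary tree). Then the total number of matchings of T is at most F_{n+1}, the (n+1)-th Fibonacci number (with F_1 = F_2 = 1). -/
/-!
Every finite forest with at least one edge has a leaf `v`, with neighbour `w`. A matching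
either avoids the edge `vw`, and then it is a matching of the forest with `v` deleted, or
it contains `vw`, and then removing it leaves a matching of the forest with `v` and `w`
deleted. Hence the number of matchings `m(k)` of a forest on `k` vertices satisfies
`m(k) ≤ m(k - 1) + m(k - 2)`, the Fibonacci recurrence. Working with the matchings whose
edges lie inside a vertex set `s` keeps the induction inside the one graph `G`.
-/

namespace SimpleGraph

variable {V : Type*} {G : SimpleGraph V}

theorem IsAcyclic.exists_adj_forall_adj_eq [Finite G.edgeSet] (hG : G.IsAcyclic) {a b : V}
    (hab : G.Adj a b) : ∃ v w, G.Adj v w ∧ ∀ x, G.Adj v x → x = w := by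
  have : Nonempty V := ⟨a⟩
  -- the first vertex of a longest path is a leaf
  obtain ⟨u, u', p, hp, hmax⟩ := Walk.exists_isPath_forall_isPath_length_le_length G
  have hnil : ¬p.Nil := by
    have := hmax a b hab.toWalk (by simp [hab.ne])
    rw [← Walk.length_eq_zero_iff]
    simp only [Adj.toWalk, Walk.length_cons, Walk.length_nil] at this
    omega
  refine ⟨u, p.snd, p.adj_snd hnil, fun x hx => hG.eq_snd_of_adj_start hp hx ?_⟩
  by_contra hxp
  simpa using hmax _ _ (p.cons hx.symm) (hp.cons hxp)

theorem IsAcyclic.exists_adj_forall_adj_eq_of_mem [Finite V] (hG : G.IsAcyclic) {s : Finset V}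
    (hs : ∃ a ∈ s, ∃ b ∈ s, G.Adj a b) :
    ∃ v ∈ s, ∃ w ∈ s, G.Adj v w ∧ ∀ x ∈ s, G.Adj v x → x = w := by
  obtain ⟨a, ha, b, hb, hab⟩ := hs
  obtain ⟨⟨v, hv⟩, ⟨w, hw⟩, hvw, hleaf⟩ :=
    (hG.induce (s : Set V)).exists_adj_forall_adj_eq (a := ⟨a, ha⟩) (b := ⟨b, hb⟩) hab
  exact ⟨v, hv, w, hw, hvw, fun x hx hvx => congrArg Subtype.val (hleaf ⟨x, hx⟩ hvx)⟩

end SimpleGraph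

section Matchings

variable {V : Type*} {G : SimpleGraph V}

theorem IsMatchingSet.subset {M M' : Finset (Sym2 V)} (hM : IsMatchingSet G M) (h : M' ⊆ M) :
    IsMatchingSet G M' :=
  ⟨fun e he => hM.1 e (h he), fun e he f hf hef => hM.2 e (h he) f (h hf) hef⟩

theorem IsMatchingSet.eq_of_mem_of_mem {M : Finset (Sym2 V)} (hM : IsMatchingSet G M)
    {e f : Sym2 V} (he : e ∈ M) (hf : f ∈ M) {x : V} (hxe : x ∈ e) (hxf : x ∈ f) :
    e = f := by
  by_contra hef
  exact hM.2 e he f hf hef x ⟨hxe, hxf⟩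

def matchingsWithin (G : SimpleGraph V) (s : Finset V) : Set (Finset (Sym2 V)) :=
  {M | IsMatchingSet G M ∧ ∀ e ∈ M, ∀ x ∈ e, x ∈ s}

theorem matchingsWithin_univ [Fintype V] :
    matchingsWithin G Finset.univ = {M | IsMatchingSet G M} := by
  simp [matchingsWithin]

theorem matchingsWithin_subset_singleton_empty {s : Finset V}
    (hs : ∀ x ∈ s, ∀ y ∈ s, ¬G.Adj x y) : matchingsWithin G s ⊆ {∅} := by
  rintro M ⟨hM, hMs⟩
  rw [Set.mem_singleton_iff, ← Finset.not_nonempty_iff_eq_empty]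
  rintro ⟨e, he⟩
  induction e with
  | h x y =>
    exact hs x (hMs _ he x (Sym2.mem_mk_left x y)) y (hMs _ he y (Sym2.mem_mk_right x y))
      (hM.1 _ he)

theorem mem_matchingsWithin_erase_of_forall_adj_eq [DecidableEq V] {s : Finset V} {v w : V}
    (hleaf : ∀ x ∈ s, G.Adj v x → x = w) {M : Finset (Sym2 V)}
    (hM : M ∈ matchingsWithin G s) (hvw : s(v, w) ∉ M) :
    M ∈ matchingsWithin G (s.erase v) := by
  refine ⟨hM.1, fun e he x hx => Finset.mem_erase.2 ⟨?_, hM.2 e he x hx⟩⟩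
  rintro rfl
  obtain ⟨y, rfl⟩ := Sym2.mem_iff_exists.1 hx
  have hy : y = w := hleaf y (hM.2 _ he y (Sym2.mem_mk_right x y)) (hM.1.1 _ he)
  exact hvw (hy ▸ he)

theorem erase_mem_matchingsWithin_erase_erase [DecidableEq V] {s : Finset V} {v w : V}
    {M : Finset (Sym2 V)} (hM : M ∈ matchingsWithin G s) (hvw : s(v, w) ∈ M) :
    M.erase s(v, w) ∈ matchingsWithin G ((s.erase v).erase w) := by
  refine ⟨hM.1.subset (Finset.erase_subset _ _), fun e he x hx => ?_⟩
  obtain ⟨hne, he⟩ := Finset.mem_erase.1 he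
  have hxvw : x ∉ s(v, w) := fun h => hne (hM.1.eq_of_mem_of_mem he hvw hx h)
  simp only [Sym2.mem_iff, not_or] at hxvw
  exact Finset.mem_erase.2 ⟨hxvw.2, Finset.mem_erase.2 ⟨hxvw.1, hM.2 e he x hx⟩⟩

theorem ncard_matchingsWithin_le_of_forall_adj_eq [Finite V] [DecidableEq V] {s : Finset V}
    {v w : V} (hleaf : ∀ x ∈ s, G.Adj v x → x = w) :
    (matchingsWithin G s).ncard ≤
      (matchingsWithin G (s.erase v)).ncard + (matchingsWithin G ((s.erase v).erase w)).ncard := by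
  let avoiding := {M ∈ matchingsWithin G s | s(v, w) ∉ M}
  let containing := {M ∈ matchingsWithin G s | s(v, w) ∈ M}
  have hsplit : matchingsWithin G s ⊆ avoiding ∪ containing := fun M hM =>
    (em (s(v, w) ∈ M)).elim (fun h => Or.inr ⟨hM, h⟩) (fun h => Or.inl ⟨hM, h⟩)
  have havoiding : avoiding.ncard ≤ (matchingsWithin G (s.erase v)).ncard :=
    Set.ncard_le_ncard (fun M hM => mem_matchingsWithin_erase_of_forall_adj_eq hleaf hM.1 hM.2)
  have hcontaining : containing.ncard ≤ (matchingsWithin G ((s.erase v).erase w)).ncard :=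
    Set.ncard_le_ncard_of_injOn (fun M => M.erase s(v, w))
      (fun M hM => erase_mem_matchingsWithin_erase_erase hM.1 hM.2)
      ((Finset.erase_injOn' _).mono fun M hM => hM.2)
  calc (matchingsWithin G s).ncard ≤ (avoiding ∪ containing).ncard := Set.ncard_le_ncard hsplit
    _ ≤ avoiding.ncard + containing.ncard := Set.ncard_union_le _ _
    _ ≤ _ := add_le_add havoiding hcontaining

theorem SimpleGraph.IsAcyclic.ncard_matchingsWithin_le_fib [Finite V] (hG : G.IsAcyclic)
    (s : Finset V) :
    (matchingsWithin G s).ncard ≤ Nat.fib (s.card + 1) := by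
  classical
  induction s using Finset.strongInduction with
  | H s ih =>
  by_cases hedge : ∃ a ∈ s, ∃ b ∈ s, G.Adj a b
  · obtain ⟨v, hv, w, hw, hvw, hleaf⟩ := hG.exists_adj_forall_adj_eq_of_mem hedge
    have hw' : w ∈ s.erase v := Finset.mem_erase.2 ⟨hvw.ne.symm, hw⟩
    obtain ⟨m, hm⟩ : ∃ m, s.card = m + 2 :=
      Nat.exists_eq_add_of_le' (Finset.one_lt_card.2 ⟨v, hv, w, hw, hvw.ne⟩)
    have h₁ := ih _ (Finset.erase_ssubset hv)
    have h₂ := ih _ ((Finset.erase_ssubset hw').trans (Finset.erase_ssubset hv))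
    rw [Finset.card_erase_of_mem hw', Finset.card_erase_of_mem hv, hm] at h₂
    rw [Finset.card_erase_of_mem hv, hm] at h₁
    calc (matchingsWithin G s).ncard
        ≤ (matchingsWithin G (s.erase v)).ncard
          + (matchingsWithin G ((s.erase v).erase w)).ncard :=
          ncard_matchingsWithin_le_of_forall_adj_eq hleaf
      _ ≤ Nat.fib (m + 2) + Nat.fib (m + 1) := add_le_add h₁ h₂
      _ = Nat.fib (s.card + 1) := by rw [hm, add_comm, ← Nat.fib_add_two]
  · push Not at hedge
    calc (matchingsWithin G s).ncard ≤ ({∅} : Set (Finset (Sym2 V))).ncard :=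
          Set.ncard_le_ncard (matchingsWithin_subset_singleton_empty hedge)
      _ = 1 := Set.ncard_singleton _
      _ ≤ Nat.fib (s.card + 1) := Nat.fib_pos.2 s.card.succ_pos

end Matchings

theorem matchings_le_fib_succ_general {V : Type*} [Fintype V]
    (G : SimpleGraph V) (hT : G.IsTree)
    (n : ℕ) (hn : Fintype.card V = n) :
    {M : Finset (Sym2 V) | IsMatchingSet G M}.ncard ≤ Nat.fib (n + 1) := by
  rw [← matchingsWithin_univ, ← hn, ← Finset.card_univ]
  exact hT.isAcyclic.ncard_matchingsWithin_le_fib _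

/-- Let `G` be a finite rooted tree with `n ≥ 1` nodes, rooted at `u`, in which
every node has at most two children (so the root has at most `2` neighbors and
every other node has at most `3` neighbors). Then the total number of matchings
of `G` is at most `F (n+1)`, the `(n+1)`-th Fibonacci number
(with `F 1 = F 2 = 1`). -/
theorem matchings_le_fib_succ {V : Type*} [Fintype V]
    (G : SimpleGraph V) (hT : G.IsTree) (u : V)
    (hroot : (G.neighborSet u).ncard ≤ 2)
    (hbin : ∀ v : V, v ≠ u → (G.neighborSet v).ncard ≤ 3)
    (n : ℕ) (hn : Fintype.card V = n) (hn1 : 1 ≤ n) :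
    {M : Finset (Sym2 V) | IsMatchingSet G M}.ncard ≤ Nat.fib (n + 1) :=
  matchings_le_fib_succ_general G hT n hn
end

section
/- Let T_init and T_final be triangulations of the same convex polygon, and let e_1 and e_2 be two distinct free-diagonals of T_init with respect to T_final. Then e_1 and e_2 are independent in T_init, i.e., they do not lie on a common triangle of T_init. -/
open Finset

/-- Two vertices of the convex `m`-gon are adjacent in the cyclic order. -/
def PolyAdj (m : ℕ) (a b : Fin m) : Prop :=
  (a.val + 1) % m = b.val ∨ (b.val + 1) % m = a.val

/-- `e` is a diagonal of the convex `m`-gon: an unordered pair of distinct,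
non-adjacent vertices. -/
def IsDiagonal (m : ℕ) (e : Finset (Fin m)) : Prop :=
  ∃ a b : Fin m, a ≠ b ∧ ¬ PolyAdj m a b ∧ e = {a, b}

/-- The cyclic distance from `a` to `x`, going forwards in the cyclic order. -/
def cycDist (m : ℕ) (a x : Fin m) : ℕ := (x.val + m - a.val) % m

/-- `x` lies strictly between `a` and `b` in the cyclic order. -/
def CycBtw (m : ℕ) (a x b : Fin m) : Prop :=
  0 < cycDist m a x ∧ cycDist m a x < cycDist m a b

/-- Two chords cross: their endpoints strictly interleave in the cyclic order. -/
def Cross (m : ℕ) (e₁ e₂ : Finset (Fin m)) : Prop :=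
  ∃ a b c d : Fin m, e₁ = {a, b} ∧ e₂ = {c, d} ∧ CycBtw m a c b ∧ CycBtw m b d a

/-- A triangulation of the convex `m`-gon: a maximal set of pairwise
non-crossing diagonals. -/
structure Triangulation (m : ℕ) where
  diagonals : Finset (Finset (Fin m))
  isDiagonal : ∀ e ∈ diagonals, IsDiagonal m e
  noncross : ∀ e₁ ∈ diagonals, ∀ e₂ ∈ diagonals, ¬ Cross m e₁ e₂
  maximal : ∀ e, IsDiagonal m e → (∀ e' ∈ diagonals, ¬ Cross m e e') → e ∈ diagonals

/-- `e` is a side in the triangulation `T`: either an edge of the polygon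
(between cyclically adjacent vertices) or a diagonal of `T`. -/
def IsSide (m : ℕ) (T : Triangulation m) (e : Finset (Fin m)) : Prop :=
  (∃ a b : Fin m, PolyAdj m a b ∧ e = {a, b}) ∨ e ∈ T.diagonals

/-- `t` is a triangle of the triangulation `T`: three distinct vertices each
pair of which forms a side of `T`. -/
def IsTriangle (m : ℕ) (T : Triangulation m) (t : Finset (Fin m)) : Prop :=
  ∃ a b c : Fin m, a ≠ b ∧ a ≠ c ∧ b ≠ c ∧ t = {a, b, c} ∧
    IsSide m T {a, b} ∧ IsSide m T {a, c} ∧ IsSide m T {b, c}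

/-- Two diagonals of `T` are neighbors if they both belong to `T` and lie on a
common triangle of `T`; they are independent otherwise. -/
def Neighbor (m : ℕ) (T : Triangulation m) (e₁ e₂ : Finset (Fin m)) : Prop :=
  e₁ ∈ T.diagonals ∧ e₂ ∈ T.diagonals ∧
    ∃ t, IsTriangle m T t ∧ e₁ ⊆ t ∧ e₂ ⊆ t

/-- `T'` is obtained from `T` by flipping the diagonal `e`, which removes `e`
and creates the new diagonal `e'` (necessarily the opposite diagonal of the
quadrilateral formed by the two triangles of `T` containing `e`, since `T'` is
again a triangulation). -/
def IsFlip (m : ℕ) (T T' : Triangulation m) (e e' : Finset (Fin m)) : Prop :=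
  e ∈ T.diagonals ∧ e' ∉ T.diagonals ∧
    T'.diagonals = insert e' (T.diagonals.erase e)

/-- `Ts 0, Ts 1, …, Ts r` is a sequence of triangulations in which `Ts (i+1)`
is obtained from `Ts i` by performing the flip `F i`, which removes the
diagonal `(F i).1` and creates the diagonal `(F i).2`. -/
def IsFlipSeq (m r : ℕ) (F : ℕ → Finset (Fin m) × Finset (Fin m))
    (Ts : ℕ → Triangulation m) : Prop :=
  ∀ i < r, IsFlip m (Ts i) (Ts (i + 1)) (F i).1 (F i).2

/-- The flip distance between two triangulations: the minimum length of a flip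
sequence transforming one into the other. -/
noncomputable def FlipDist (m : ℕ) (T T' : Triangulation m) : ℕ :=
  sInf {r | ∃ F Ts, IsFlipSeq m r F Ts ∧ Ts 0 = T ∧ Ts r = T'}

/-- `e` is a free-diagonal of `T` with respect to `Tfinal`: flipping `e` in `T`
creates a diagonal belonging to `Tfinal`. -/
def FreeDiagonal (m : ℕ) (T Tfinal : Triangulation m) (e : Finset (Fin m)) : Prop :=
  ∃ T' e', IsFlip m T T' e e' ∧ e' ∈ Tfinal.diagonals

/-- Arc of the DAG `D_F` associated to the flip sequence `F` with triangulation
sequence `Ts`: there is an arc from flip `i` to flip `j` when `i < j` and the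
diagonal created by flip `i` is a neighbor of the diagonal removed by flip `j`
in the triangulation `Ts j` in which flip `j` is performed. -/
def Arc (m r : ℕ) (F : ℕ → Finset (Fin m) × Finset (Fin m))
    (Ts : ℕ → Triangulation m) (i j : ℕ) : Prop :=
  i < j ∧ j < r ∧ Neighbor m (Ts j) (F i).2 (F j).1

/-!
Let `xy` and `yz` be diagonals of `T_init` on a common triangle `xyz`. The diagonal created by
flipping `xy` crosses `xy` and no other side of `T_init`; as it crosses neither `yz` nor `xz`,
it issues from `z` and separates `x` from `y`. Likewise the diagonal created by flipping `yz`
issues from `x` and separates `y` from `z`. These two diagonals cross, so they cannot both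
belong to `T_final`.
-/

lemma cycBtw_iff_val {m : ℕ} {a x b : Fin m} :
    CycBtw m a x b ↔
      a.1 < x.1 ∧ x.1 < b.1 ∨ b.1 < a.1 ∧ a.1 < x.1 ∨ x.1 < b.1 ∧ b.1 < a.1 := by
  have hmod : ∀ {u v : Fin m}, cycDist m u v = if u.1 ≤ v.1 then v.1 - u.1 else v.1 + m - u.1 := by
    intro u v
    unfold cycDist
    split_ifs with h
    · rw [show v.1 + m - u.1 = v.1 - u.1 + m by omega, Nat.add_mod_right,
        Nat.mod_eq_of_lt (by omega)]
    · exact Nat.mod_eq_of_lt (by omega)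
  unfold CycBtw
  rw [hmod, hmod]
  split_ifs <;> omega

lemma cross_pair_pair_iff {m : ℕ} {p q x y : Fin m} :
    Cross m {p, q} {x, y} ↔
      CycBtw m p x q ∧ CycBtw m q y p ∨ CycBtw m p y q ∧ CycBtw m q x p := by
  constructor
  · rintro ⟨a, b, c, d, hab, hcd, h₁, h₂⟩
    have ha : a ∈ ({p, q} : Finset (Fin m)) := hab ▸ by simp
    have hb : b ∈ ({p, q} : Finset (Fin m)) := hab ▸ by simp
    have hc : c ∈ ({x, y} : Finset (Fin m)) := hcd ▸ by simp
    have hd : d ∈ ({x, y} : Finset (Fin m)) := hcd ▸ by simp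
    simp only [mem_insert, mem_singleton, Fin.ext_iff] at ha hb hc hd
    simp only [cycBtw_iff_val] at h₁ h₂ ⊢
    omega
  · rintro (⟨h₁, h₂⟩ | ⟨h₁, h₂⟩)
    · exact ⟨p, q, x, y, rfl, rfl, h₁, h₂⟩
    · exact ⟨p, q, y, x, rfl, pair_comm x y, h₁, h₂⟩

lemma PolyAdj.val_eq_add_one_or {m : ℕ} {u v : Fin m} (h : PolyAdj m u v) :
    v.1 = u.1 + 1 ∨ u.1 = v.1 + 1 ∨ u.1 + 1 = m ∧ v.1 = 0 ∨ v.1 + 1 = m ∧ u.1 = 0 := by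
  have succ_mod : ∀ a : Fin m, (a.1 + 1) % m = a.1 + 1 ∨ a.1 + 1 = m ∧ (a.1 + 1) % m = 0 := by
    intro a
    rcases (show a.1 + 1 ≤ m from a.2).lt_or_eq with h | h
    · exact Or.inl (Nat.mod_eq_of_lt h)
    · exact Or.inr ⟨h, by rw [h, Nat.mod_self]⟩
  rcases h with h | h <;> rcases succ_mod u with hu | hu <;> rcases succ_mod v with hv | hv <;>
    omega

lemma not_cross_of_polyAdj {m : ℕ} {u v : Fin m} (h : PolyAdj m u v) (f : Finset (Fin m)) :
    ¬ Cross m f {u, v} := by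
  intro hf
  obtain ⟨p, q, -, -, rfl, -⟩ := id hf
  have := h.val_eq_add_one_or
  simp only [cross_pair_pair_iff, cycBtw_iff_val] at hf
  omega

lemma cycBtw_or_cycBtw {m : ℕ} {p q z : Fin m} (hpq : p ≠ q) (hzp : z ≠ p) (hzq : z ≠ q) :
    CycBtw m p z q ∨ CycBtw m q z p := by
  rw [Ne, Fin.ext_iff] at hpq hzp hzq
  simp only [cycBtw_iff_val]
  omega

lemma exists_eq_pair_of_cross_of_not_cross {m : ℕ} {f : Finset (Fin m)} {x y z : Fin m}
    (hxy : Cross m f {x, y}) (hyz : ¬ Cross m f {y, z}) (hxz : ¬ Cross m f {x, z}) :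
    ∃ w, f = {z, w} := by
  obtain ⟨p, q, -, -, rfl, -⟩ := id hxy
  have hpq : p ≠ q := by
    rintro rfl
    simp only [cross_pair_pair_iff, cycBtw_iff_val] at hxy
    omega
  rw [cross_pair_pair_iff] at hxy hyz hxz
  by_cases hzp : z = p
  · exact ⟨q, by rw [hzp]⟩
  by_cases hzq : z = q
  · exact ⟨p, by rw [hzq, pair_comm]⟩
  rcases hxy with ⟨hx, hy⟩ | ⟨hy, hx⟩ <;> rcases cycBtw_or_cycBtw hpq hzp hzq with hz | hz
  exacts [(hyz (.inr ⟨hz, hy⟩)).elim, (hxz (.inl ⟨hx, hz⟩)).elim,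
    (hxz (.inr ⟨hz, hx⟩)).elim, (hyz (.inl ⟨hy, hz⟩)).elim]

lemma cross_of_cross_of_cross {m : ℕ} {x y z w₁ w₂ : Fin m}
    (h₁ : Cross m {z, w₁} {x, y}) (h₂ : Cross m {x, w₂} {z, y}) :
    Cross m {z, w₁} {x, w₂} := by
  simp only [cross_pair_pair_iff, cycBtw_iff_val] at h₁ h₂ ⊢
  omega

namespace IsFlip

variable {m : ℕ} {T T' : Triangulation m} {e e' g : Finset (Fin m)}

lemma not_cross_of_mem (h : IsFlip m T T' e e') (hg : g ∈ T.diagonals) (hge : g ≠ e) :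
    ¬ Cross m e' g := by
  obtain ⟨-, -, hT'⟩ := h
  exact T'.noncross e' (by simp [hT']) g (by simp [hT', hge, hg])

lemma not_cross_of_isSide (h : IsFlip m T T' e e') (hg : IsSide m T g) (hge : g ≠ e) :
    ¬ Cross m e' g := by
  rcases hg with ⟨u, v, huv, rfl⟩ | hg
  · exact not_cross_of_polyAdj huv e'
  · exact h.not_cross_of_mem hg hge

/-- The created diagonal crosses the removed one: otherwise it would cross no diagonal of
`T`, and maximality of `T` would put it in `T` already. -/
lemma cross (h : IsFlip m T T' e e') : Cross m e' e := by
  have he' : IsDiagonal m e' := T'.isDiagonal e' (by simp [h.2.2])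
  obtain ⟨g, hg, hcross⟩ : ∃ g ∈ T.diagonals, Cross m e' g := by
    by_contra! hno
    exact h.2.1 (T.maximal e' he' hno)
  obtain rfl : g = e := by_contra fun hge => h.not_cross_of_mem hg hge hcross
  exact hcross

lemma exists_eq_pair_of_isSide {x y z : Fin m} (h : IsFlip m T T' {x, y} e')
    (hxz : x ≠ z) (hyz : y ≠ z) (hsyz : IsSide m T {y, z}) (hsxz : IsSide m T {x, z}) :
    ∃ w, e' = {z, w} :=
  exists_eq_pair_of_cross_of_not_cross h.cross
    (h.not_cross_of_isSide hsyz (ne_of_mem_of_not_mem' (a := z) (by simp) (by simp [*, Ne.symm])))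
    (h.not_cross_of_isSide hsxz (ne_of_mem_of_not_mem' (a := z) (by simp) (by simp [*, Ne.symm])))

end IsFlip

lemma IsDiagonal.card_eq_two {m : ℕ} {e : Finset (Fin m)} (h : IsDiagonal m e) : #e = 2 := by
  obtain ⟨a, b, hab, -, rfl⟩ := h
  exact card_pair hab

lemma IsTriangle.isSide {m : ℕ} {T : Triangulation m} {t : Finset (Fin m)}
    (ht : IsTriangle m T t) {u v : Fin m} (hu : u ∈ t) (hv : v ∈ t) (huv : u ≠ v) :
    IsSide m T {u, v} := by
  obtain ⟨a, b, c, -, -, -, rfl, hab, hac, hbc⟩ := ht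
  simp only [mem_insert, mem_singleton] at hu hv
  rcases hu with rfl | rfl | rfl <;> rcases hv with rfl | rfl | rfl <;>
    first | exact absurd rfl huv | assumption | rwa [pair_comm]

lemma exists_eq_pair_pair_of_card_union_le_three {α : Type*} [DecidableEq α]
    {e₁ e₂ : Finset α} (h₁ : #e₁ = 2) (h₂ : #e₂ = 2) (hne : e₁ ≠ e₂) (h : #(e₁ ∪ e₂) ≤ 3) :
    ∃ x y z, x ≠ y ∧ x ≠ z ∧ y ≠ z ∧ e₁ = {x, y} ∧ e₂ = {y, z} := by
  have hinter : #(e₁ ∩ e₂) = 1 := by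
    have hlt : #(e₁ ∩ e₂) < #e₁ := by
      refine card_lt_card (ssubset_of_subset_of_ne inter_subset_left fun heq => hne ?_)
      exact eq_of_subset_of_card_le (heq ▸ inter_subset_right) (by omega)
    have := card_union_add_card_inter e₁ e₂
    omega
  obtain ⟨y, hy⟩ := card_eq_one.mp hinter
  have hy₁ : y ∈ e₁ := mem_of_mem_inter_left (hy ▸ mem_singleton_self y)
  have hy₂ : y ∈ e₂ := mem_of_mem_inter_right (hy ▸ mem_singleton_self y)
  obtain ⟨x, hx⟩ := card_eq_one.mp (by rw [card_erase_of_mem hy₁, h₁] : #(e₁.erase y) = 1)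
  obtain ⟨z, hz⟩ := card_eq_one.mp (by rw [card_erase_of_mem hy₂, h₂] : #(e₂.erase y) = 1)
  have hx₁ : x ∈ e₁.erase y := hx ▸ mem_singleton_self x
  have hz₂ : z ∈ e₂.erase y := hz ▸ mem_singleton_self z
  refine ⟨x, y, z, ne_of_mem_erase hx₁, fun hxz => ?_, (ne_of_mem_erase hz₂).symm, ?_, ?_⟩
  · have : x ∈ e₁ ∩ e₂ := mem_inter.mpr ⟨mem_of_mem_erase hx₁, hxz ▸ mem_of_mem_erase hz₂⟩
    exact ne_of_mem_erase hx₁ (mem_singleton.mp (hy ▸ this))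
  · rw [← insert_erase hy₁, hx, pair_comm]
  · rw [← insert_erase hy₂, hz]

lemma not_freeDiagonal_of_freeDiagonal {m : ℕ} {T Tfinal : Triangulation m} {x y z : Fin m}
    (hxy : x ≠ y) (hxz : x ≠ z) (hyz : y ≠ z) (hsxy : IsSide m T {x, y})
    (hsyz : IsSide m T {y, z}) (hsxz : IsSide m T {x, z})
    (h₁ : FreeDiagonal m T Tfinal {x, y}) : ¬ FreeDiagonal m T Tfinal {y, z} := by
  rintro ⟨T₂, f₂, hflip₂, hf₂⟩
  obtain ⟨T₁, f₁, hflip₁, hf₁⟩ := h₁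
  obtain ⟨w₁, rfl⟩ := hflip₁.exists_eq_pair_of_isSide hxz hyz hsyz hsxz
  rw [pair_comm y z] at hflip₂
  rw [pair_comm x y] at hsxy
  rw [pair_comm x z] at hsxz
  obtain ⟨w₂, rfl⟩ := hflip₂.exists_eq_pair_of_isSide hxz.symm hxy.symm hsxy hsxz
  exact Tfinal.noncross _ hf₁ _ hf₂ (cross_of_cross_of_cross hflip₁.cross hflip₂.cross)

theorem freeDiagonals_independent_general (m : ℕ)
    (Tinit Tfinal : Triangulation m) (e₁ e₂ : Finset (Fin m))
    (h₁ : FreeDiagonal m Tinit Tfinal e₁) (h₂ : FreeDiagonal m Tinit Tfinal e₂)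
    (hne : e₁ ≠ e₂) :
    ¬ Neighbor m Tinit e₁ e₂ := by
  rintro ⟨he₁, he₂, t, ht, h₁t, h₂t⟩
  have hcard : #(e₁ ∪ e₂) ≤ 3 := by
    obtain ⟨a, b, c, -, -, -, rfl, -⟩ := ht
    exact (card_le_card (union_subset h₁t h₂t)).trans card_le_three
  obtain ⟨x, y, z, hxy, hxz, hyz, rfl, rfl⟩ :=
    exists_eq_pair_pair_of_card_union_le_three (Tinit.isDiagonal _ he₁).card_eq_two
      (Tinit.isDiagonal _ he₂).card_eq_two hne hcard
  have hx : x ∈ t := h₁t (by simp)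
  have hy : y ∈ t := h₁t (by simp)
  have hz : z ∈ t := h₂t (by simp)
  exact not_freeDiagonal_of_freeDiagonal hxy hxz hyz (ht.isSide hx hy hxy)
    (ht.isSide hy hz hyz) (ht.isSide hx hz hxz) h₁ h₂

/-- If `e₁` and `e₂` are two distinct free-diagonals of `Tinit` with respect to
`Tfinal`, then `e₁` and `e₂` are independent in `Tinit`, i.e. they do not lie
on a common triangle of `Tinit`. -/
theorem freeDiagonals_independent (m : ℕ) (hm : 3 ≤ m)
    (Tinit Tfinal : Triangulation m) (e₁ e₂ : Finset (Fin m))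
    (h₁ : FreeDiagonal m Tinit Tfinal e₁) (h₂ : FreeDiagonal m Tinit Tfinal e₂)
    (hne : e₁ ≠ e₂) :
    ¬ Neighbor m Tinit e₁ e₂ :=
  freeDiagonals_independent_general m Tinit Tfinal e₁ e₂ h₁ h₂ hne
end

section
/- Let T_init and T_final be triangulations of the same convex polygon with Dist(T_init, T_final) = φ(T_init) − C(T_init, T_final) (a trivial pair). Then there exists a flip sequence of this minimum length transforming T_init into T_final in which every flip is performed on a diagonal that is a free-diagonal (with respect to T_final) of the triangulation in which it is flipped. -/
open Finset

/-!
Count the diagonals of a triangulation that are not in `T_final`. A flip changes one diagonal,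
so it lowers this count by at most one, and it lowers it at all only when the diagonal it creates
belongs to `T_final`. For a trivial pair, a shortest flip sequence has length equal to the initial
count and ends at count zero, so every one of its flips must lower the count, that is, create a
diagonal of `T_final`.
-/

variable {m : ℕ}

theorem Triangulation.eq_of_diagonals_subset {T T' : Triangulation m}
    (h : T.diagonals ⊆ T'.diagonals) : T = T' := by
  have hsup : T'.diagonals ⊆ T.diagonals := fun e he =>
    T.maximal e (T'.isDiagonal e he) fun e' he' => T'.noncross e he e' (h he')
  cases T
  cases T'
  cases Subset.antisymm h hsup
  rfl

section Flip

variable {T T' : Triangulation m} {e e' : Finset (Fin m)}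

theorem IsFlip.card_sdiff_le_succ (hflip : IsFlip m T T' e e') (S : Finset (Finset (Fin m))) :
    #(T.diagonals \ S) ≤ #(T'.diagonals \ S) + 1 := by
  have hsub : T.diagonals \ S ⊆ insert e (T'.diagonals \ S) := by
    rw [hflip.2.2]
    intro x
    grind
  exact (card_le_card hsub).trans (card_insert_le _ _)

theorem IsFlip.card_sdiff_le_of_notMem (hflip : IsFlip m T T' e e')
    {S : Finset (Finset (Fin m))} (hS : e' ∉ S) :
    #(T.diagonals \ S) ≤ #(T'.diagonals \ S) := by
  obtain ⟨-, hnew, hT'⟩ := hflip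
  have hsdiff : T'.diagonals \ S = insert e' ((T.diagonals \ S).erase e) := by
    rw [hT']
    ext x
    grind
  have hnotMem : e' ∉ (T.diagonals \ S).erase e := fun h =>
    hnew (mem_sdiff.mp (mem_of_mem_erase h)).1
  rw [hsdiff, card_insert_of_notMem hnotMem]
  exact Nat.le_succ_of_pred_le pred_card_le_card_erase

end Flip

section FlipSeq

variable {r : ℕ} {F : ℕ → Finset (Fin m) × Finset (Fin m)} {Ts : ℕ → Triangulation m}

theorem IsFlipSeq.card_sdiff_le (hseq : IsFlipSeq m r F Ts) (S : Finset (Finset (Fin m)))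
    {i j : ℕ} (hij : i ≤ j) (hj : j ≤ r) :
    #((Ts i).diagonals \ S) ≤ #((Ts j).diagonals \ S) + (j - i) := by
  induction j, hij using Nat.le_induction with
  | base => simp
  | succ j hij ih =>
    have hstep := (hseq j (by omega)).card_sdiff_le_succ S
    have := ih (by omega)
    omega

theorem IsFlipSeq.snd_mem_of_add_card_sdiff_le (hseq : IsFlipSeq m r F Ts)
    (S : Finset (Finset (Fin m)))
    (htight : r + #((Ts r).diagonals \ S) ≤ #((Ts 0).diagonals \ S)) :
    ∀ i < r, (F i).2 ∈ S := by
  intro i hi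
  by_contra hnotMem
  have hbefore := hseq.card_sdiff_le S (Nat.zero_le i) hi.le
  have hflip := (hseq i hi).card_sdiff_le_of_notMem hnotMem
  have hafter := hseq.card_sdiff_le S (i := i + 1) hi le_rfl
  omega

end FlipSeq

theorem exists_isFlipSeq_flipDist {T T' : Triangulation m}
    (hreach : ∃ r F Ts, IsFlipSeq m r F Ts ∧ Ts 0 = T ∧ Ts r = T') :
    ∃ F Ts, IsFlipSeq m (FlipDist m T T') F Ts ∧ Ts 0 = T ∧ Ts (FlipDist m T T') = T' :=
  Nat.sInf_mem hreach

theorem trivial_pair_free_sequence_general (m : ℕ)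
    (Tinit Tfinal : Triangulation m)
    (htriv : FlipDist m Tinit Tfinal =
      Tinit.diagonals.card - (Tinit.diagonals ∩ Tfinal.diagonals).card) :
    ∃ (F : ℕ → Finset (Fin m) × Finset (Fin m)) (Ts : ℕ → Triangulation m),
      IsFlipSeq m (FlipDist m Tinit Tfinal) F Ts ∧
      Ts 0 = Tinit ∧ Ts (FlipDist m Tinit Tfinal) = Tfinal ∧
      ∀ i < FlipDist m Tinit Tfinal, FreeDiagonal m (Ts i) Tfinal (F i).1 := by
  rw [inter_comm, ← card_sdiff] at htriv
  -- `FlipDist` of an unreachable pair is `sInf ∅ = 0`; triviality would then force `Tinit = Tfinal`.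
  have hreach : ∃ r F Ts, IsFlipSeq m r F Ts ∧ Ts 0 = Tinit ∧ Ts r = Tfinal := by
    by_contra hunreach
    have hdist : FlipDist m Tinit Tfinal = 0 :=
      Nat.sInf_eq_zero.mpr (Or.inr (Set.eq_empty_of_forall_notMem fun r hr => hunreach ⟨r, hr⟩))
    have hsub : Tinit.diagonals ⊆ Tfinal.diagonals :=
      sdiff_eq_empty_iff_subset.mp (card_eq_zero.mp (htriv ▸ hdist))
    exact hunreach ⟨0, fun _ => (∅, ∅), fun _ => Tinit, fun _ h => absurd h (Nat.not_lt_zero _),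
      rfl, Triangulation.eq_of_diagonals_subset hsub⟩
  obtain ⟨F, Ts, hseq, h0, hlast⟩ := exists_isFlipSeq_flipDist hreach
  have hcreates := hseq.snd_mem_of_add_card_sdiff_le Tfinal.diagonals
    (by rw [h0, hlast, sdiff_self, bot_eq_empty, card_empty, add_zero, htriv])
  exact ⟨F, Ts, hseq, h0, hlast, fun i hi => ⟨Ts (i + 1), (F i).2, hseq i hi, hcreates i hi⟩⟩

/-- Let `Tinit` and `Tfinal` be triangulations of the same convex polygon with
`Dist(Tinit, Tfinal) = φ(Tinit) − C(Tinit, Tfinal)` (a trivial pair). Then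
there exists a flip sequence of this minimum length transforming `Tinit` into
`Tfinal` in which every flip is performed on a diagonal that is a
free-diagonal (with respect to `Tfinal`) of the triangulation in which it is
flipped. -/
theorem trivial_pair_free_sequence (m : ℕ) (hm : 3 ≤ m)
    (Tinit Tfinal : Triangulation m)
    (htriv : FlipDist m Tinit Tfinal =
      Tinit.diagonals.card - (Tinit.diagonals ∩ Tfinal.diagonals).card) :
    ∃ (F : ℕ → Finset (Fin m) × Finset (Fin m)) (Ts : ℕ → Triangulation m),
      IsFlipSeq m (FlipDist m Tinit Tfinal) F Ts ∧
      Ts 0 = Tinit ∧ Ts (FlipDist m Tinit Tfinal) = Tfinal ∧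
      ∀ i < FlipDist m Tinit Tfinal, FreeDiagonal m (Ts i) Tfinal (F i).1 :=
  trivial_pair_free_sequence_general m Tinit Tfinal htriv
end

section
/- Let F = ⟨f_1,…,f_r⟩ be a flip sequence transforming T_0 into T_r through intermediate triangulations T_0, T_1, …, T_r. Suppose that for some indices i < j and some h with i ≤ h < j, the diagonal f_i^→ is a neighbor of f_j^← in the triangulation T_h. Then there is a directed path from f_i to f_j in the DAG D_F. -/
open Finset

/-! Follow the neighbor relation between `(F i).2` and `(F j).1` from `Ts h` to `Ts j`. A flip
that breaks it removes a side of their common triangle. If that side is `(F j).1`, some flip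
`k < j` recreates it, and `k` is reachable from the breaking flip: as long as `(F j).1` is absent,
every diagonal crossing it was created by a reachable flip, because a flip creating a diagonal
that crosses `(F j).1` removes a neighbor of some diagonal crossing `(F j).1` (a side of the
flipped quadrilateral). Otherwise the removed side is a neighbor of `(F i).2`, the created
diagonal is a neighbor of `(F j).1`, and the argument continues from the breaking flip. -/

section

variable {m : ℕ}

lemma Finset.pair_eq_pair_iff {α : Type*} [DecidableEq α] {a b c d : α} :
    ({a, b} : Finset α) = {c, d} ↔ a = c ∧ b = d ∨ a = d ∧ b = c := by
  rw [← Finset.coe_inj, Finset.coe_pair, Finset.coe_pair, Set.pair_eq_pair_iff]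

lemma cycDist_eq (a x : Fin m) :
    cycDist m a x = if a.val ≤ x.val then x.val - a.val else x.val + m - a.val := by
  have := x.isLt
  unfold cycDist
  split_ifs
  · rw [show x.val + m - a.val = x.val - a.val + m by omega, Nat.add_mod_right,
      Nat.mod_eq_of_lt (by omega)]
  · exact Nat.mod_eq_of_lt (by omega)

lemma cycBtw_iff {a x b : Fin m} :
    CycBtw m a x b ↔ a < x ∧ x < b ∨ x < b ∧ b < a ∨ b < a ∧ a < x := by
  have := x.isLt; have := b.isLt
  simp only [CycBtw, cycDist_eq, Fin.lt_def]
  split_ifs <;> omega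

lemma polyAdj_iff {a b : Fin m} :
    PolyAdj m a b ↔ b.val = a.val + 1 ∨ a.val = b.val + 1 ∨
      a.val = 0 ∧ b.val + 1 = m ∨ b.val = 0 ∧ a.val + 1 = m := by
  have := a.isLt; have := b.isLt
  have hmod : ∀ x : Fin m, (x.val + 1) % m = if x.val + 1 = m then 0 else x.val + 1 := by
    intro x
    split_ifs with h
    · rw [h, Nat.mod_self]
    · exact Nat.mod_eq_of_lt (by omega)
  simp only [PolyAdj, hmod]
  split_ifs <;> omega

lemma PolyAdj.symm {a b : Fin m} (h : PolyAdj m a b) : PolyAdj m b a := Or.symm h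

lemma exists_polyAdj_succ (a : Fin m) :
    ∃ s : Fin m, PolyAdj m a s ∧ (s.val = a.val + 1 ∨ a.val + 1 = m ∧ s.val = 0) := by
  have ha := a.isLt
  refine ⟨⟨(a.val + 1) % m, Nat.mod_lt _ (by omega)⟩, Or.inl rfl, ?_⟩
  by_cases h : a.val + 1 = m
  · exact Or.inr ⟨h, by simp [h]⟩
  · exact Or.inl (Nat.mod_eq_of_lt (by omega))

lemma isDiagonal_pair_iff {a b : Fin m} : IsDiagonal m {a, b} ↔ a ≠ b ∧ ¬ PolyAdj m a b := by
  constructor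
  · rintro ⟨a', b', hne, hadj, h⟩
    rcases Finset.pair_eq_pair_iff.1 h with ⟨rfl, rfl⟩ | ⟨rfl, rfl⟩
    · exact ⟨hne, hadj⟩
    · exact ⟨hne.symm, fun h => hadj h.symm⟩
  · rintro ⟨hne, hadj⟩
    exact ⟨a, b, hne, hadj, rfl⟩

lemma cross_pair_iff {a b c d : Fin m} :
    Cross m {a, b} {c, d} ↔
      CycBtw m a c b ∧ CycBtw m b d a ∨ CycBtw m a d b ∧ CycBtw m b c a := by
  constructor
  · rintro ⟨a', b', c', d', hab, hcd, h1, h2⟩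
    rw [Finset.pair_eq_pair_iff] at hab hcd
    simp only [cycBtw_iff] at h1 h2 ⊢
    rcases hab with ⟨rfl, rfl⟩ | ⟨rfl, rfl⟩ <;>
      rcases hcd with ⟨rfl, rfl⟩ | ⟨rfl, rfl⟩ <;> omega
  · rintro (⟨h1, h2⟩ | ⟨h1, h2⟩)
    · exact ⟨a, b, c, d, rfl, rfl, h1, h2⟩
    · exact ⟨a, b, d, c, rfl, Finset.pair_comm c d, h1, h2⟩

lemma Cross.symm {e e' : Finset (Fin m)} (h : Cross m e e') : Cross m e' e := by
  obtain ⟨a, b, c, d, rfl, rfl, h1, h2⟩ := h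
  rw [cross_pair_iff]
  simp only [cycBtw_iff] at h1 h2 ⊢
  omega

lemma exists_eq_pair_of_cross {g : Finset (Fin m)} {a b : Fin m} (h : Cross m g {a, b}) :
    ∃ p q, g = {p, q} ∧ CycBtw m a p b ∧ CycBtw m b q a := by
  obtain ⟨a', b', p, q, hab, rfl, hp, hq⟩ := h.symm
  rcases Finset.pair_eq_pair_iff.1 hab with ⟨rfl, rfl⟩ | ⟨rfl, rfl⟩
  · exact ⟨p, q, rfl, hp, hq⟩
  · exact ⟨q, p, Finset.pair_comm p q, hq, hp⟩

lemma not_cross_of_polyAdj_s12 {c d : Fin m} (hcd : PolyAdj m c d) (e : Finset (Fin m)) :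
    ¬ Cross m e {c, d} := by
  intro h
  obtain ⟨p, q, -, hp, hq⟩ := exists_eq_pair_of_cross h
  rw [polyAdj_iff] at hcd
  rw [cycBtw_iff] at hp hq
  have := c.isLt; have := d.isLt
  omega

lemma IsSide.not_cross {T : Triangulation m} {s s' : Finset (Fin m)} (hs : IsSide m T s)
    (hs' : IsSide m T s') : ¬ Cross m s s' := by
  rcases hs' with ⟨c, d, hcd, rfl⟩ | hs'
  · exact not_cross_of_polyAdj_s12 hcd s
  rcases hs with ⟨a, b, hab, rfl⟩ | hs
  · exact fun h => not_cross_of_polyAdj_s12 hab s' h.symm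
  exact T.noncross s hs s' hs'

lemma IsSide.mem_diagonals_of_cross {T : Triangulation m} {s e : Finset (Fin m)}
    (hs : IsSide m T s) (h : Cross m e s) : s ∈ T.diagonals := by
  rcases hs with ⟨c, d, hcd, rfl⟩ | hs
  · exact absurd h (not_cross_of_polyAdj_s12 hcd e)
  · exact hs

lemma Triangulation.exists_farthest_side (T : Triangulation m) {a b : Fin m}
    (hab : {a, b} ∈ T.diagonals) :
    ∃ c, CycBtw m a c b ∧ IsSide m T {a, c} ∧
      ∀ x, CycBtw m c x b → ¬ IsSide m T {a, x} := by
  classical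
  obtain ⟨hne, hnadj⟩ := isDiagonal_pair_iff.1 (T.isDiagonal _ hab)
  let S := Finset.univ.filter fun c => CycBtw m a c b ∧ IsSide m T {a, c}
  obtain ⟨s, has, hs⟩ := exists_polyAdj_succ a
  have hsS : s ∈ S := by
    refine Finset.mem_filter.2 ⟨Finset.mem_univ _, ?_, Or.inl ⟨a, s, has, rfl⟩⟩
    rw [polyAdj_iff] at hnadj
    rw [cycBtw_iff]
    have := b.isLt
    omega
  obtain ⟨c, hcS, hmax⟩ := S.exists_max_image (cycDist m a) ⟨s, hsS⟩
  obtain ⟨hacb, hac⟩ := (Finset.mem_filter.1 hcS).2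
  refine ⟨c, hacb, hac, fun x hx hax => ?_⟩
  rw [cycBtw_iff] at hacb hx
  have hxS : x ∈ S := Finset.mem_filter.2 ⟨Finset.mem_univ _, cycBtw_iff.2 (by omega), hax⟩
  have hle := hmax x hxS
  rw [cycDist_eq, cycDist_eq] at hle
  split_ifs at hle <;> omega

/-- With `c` as in `exists_farthest_side`, a diagonal crossing `{c, b}` would cross `{a, b}` or
`{a, c}`, or join `a` to a vertex beyond `c`; so `{c, b}` is a side by maximality of `T`. -/
lemma Triangulation.exists_apex (T : Triangulation m) {a b : Fin m}
    (hab : {a, b} ∈ T.diagonals) :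
    ∃ c, CycBtw m a c b ∧ IsSide m T {a, c} ∧ IsSide m T {c, b} := by
  obtain ⟨c, hacb, hac, hfar⟩ := T.exists_farthest_side hab
  refine ⟨c, hacb, hac, ?_⟩
  by_cases hcb : PolyAdj m c b
  · exact Or.inl ⟨c, b, hcb, rfl⟩
  rw [cycBtw_iff] at hacb
  refine Or.inr (T.maximal _ (isDiagonal_pair_iff.2 ⟨by omega, hcb⟩) fun e he h => ?_)
  obtain ⟨p, q, rfl, hp, hq⟩ := exists_eq_pair_of_cross h.symm
  by_cases hqa : q = a
  · subst hqa
    exact hfar p hp (Or.inr (Finset.pair_comm p q ▸ he))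
  rw [cycBtw_iff] at hp hq
  have hq' : CycBtw m b q a ∨ CycBtw m a q c := by
    rw [cycBtw_iff, cycBtw_iff]
    omega
  rcases hq' with hq' | hq'
  · exact IsSide.not_cross (Or.inr hab) (Or.inr he)
      (cross_pair_iff.2 (Or.inl ⟨cycBtw_iff.2 (by omega), hq'⟩))
  · exact IsSide.not_cross hac (Or.inr he)
      (cross_pair_iff.2 (Or.inr ⟨hq', cycBtw_iff.2 (by omega)⟩))

lemma Triangulation.neighbor_self (T : Triangulation m) {e : Finset (Fin m)}
    (he : e ∈ T.diagonals) : Neighbor m T e e := by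
  obtain ⟨a, b, -, -, rfl⟩ := T.isDiagonal e he
  obtain ⟨c, hc, hac, hcb⟩ := T.exists_apex he
  rw [cycBtw_iff] at hc
  have hsub : ({a, b} : Finset (Fin m)) ⊆ {a, b, c} := by simp
  exact ⟨he, he, _, ⟨a, b, c, by omega, by omega, by omega, rfl, Or.inr he, hac,
    Finset.pair_comm c b ▸ hcb⟩, hsub, hsub⟩

lemma eq_apex_of_isSide {T : Triangulation m} {a b c x y : Fin m} (hc : CycBtw m a c b)
    (hac : IsSide m T {a, c}) (hcb : IsSide m T {c, b}) (hxy : IsSide m T {x, y})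
    (hx : CycBtw m a x b) (hy : CycBtw m b y a) : x = c := by
  by_contra hne
  have : CycBtw m a x c ∧ CycBtw m c y a ∨ CycBtw m c x b ∧ CycBtw m b y c := by
    simp only [cycBtw_iff] at hc hx hy ⊢
    omega
  rcases this with h | h
  · exact hac.not_cross hxy (cross_pair_iff.2 (Or.inl h))
  · exact hcb.not_cross hxy (cross_pair_iff.2 (Or.inl h))

lemma IsTriangle.exists_third {T : Triangulation m} {t : Finset (Fin m)} (ht : IsTriangle m T t)
    {p q : Fin m} (hpq : p ≠ q) (hsub : {p, q} ⊆ t) :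
    ∃ r, r ≠ p ∧ r ≠ q ∧ t = {p, q, r} ∧ IsSide m T {p, r} ∧ IsSide m T {q, r} := by
  obtain ⟨A, B, C, hAB, hAC, hBC, rfl, sAB, sAC, sBC⟩ := ht
  have sBA := Finset.pair_comm A B ▸ sAB
  have sCA := Finset.pair_comm A C ▸ sAC
  have sCB := Finset.pair_comm B C ▸ sBC
  simp only [Finset.insert_subset_iff, Finset.singleton_subset_iff, Finset.mem_insert,
    Finset.mem_singleton] at hsub
  obtain ⟨hp | hp | hp, hq | hq | hq⟩ := hsub <;> subst p q <;>
    first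
    | exact absurd rfl hpq
    | exact ⟨C, by grind, by grind, by grind, ‹_›, ‹_›⟩
    | exact ⟨B, by grind, by grind, by grind, ‹_›, ‹_›⟩
    | exact ⟨A, by grind, by grind, by grind, ‹_›, ‹_›⟩

lemma exists_eq_pair_of_subset_triple {x y p q r : Fin m} (hxy : x ≠ y)
    (hsub : ({x, y} : Finset (Fin m)) ⊆ {p, q, r}) (hne : ({x, y} : Finset (Fin m)) ≠ {p, q}) :
    ∃ v, (v = p ∨ v = q) ∧ ({x, y} : Finset (Fin m)) = {v, r} := by
  simp only [Finset.insert_subset_iff, Finset.singleton_subset_iff, Finset.mem_insert,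
    Finset.mem_singleton] at hsub
  obtain ⟨hx | hx | hx, hy | hy | hy⟩ := hsub <;> subst x y <;>
    first
    | exact absurd rfl hxy
    | exact absurd rfl hne
    | exact absurd (Finset.pair_comm _ _) hne
    | exact ⟨_, by simp, rfl⟩
    | exact ⟨_, by simp, Finset.pair_comm _ _⟩

section Flip

variable {T T' : Triangulation m} {e e' : Finset (Fin m)}

lemma IsFlip.mem_of_ne (hf : IsFlip m T T' e e') {z : Finset (Fin m)} (hz : z ∈ T.diagonals)
    (hne : z ≠ e) : z ∈ T'.diagonals := by
  rw [hf.2.2]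
  exact Finset.mem_insert_of_mem (Finset.mem_erase.2 ⟨hne, hz⟩)

lemma IsFlip.new_mem (hf : IsFlip m T T' e e') : e' ∈ T'.diagonals := by
  rw [hf.2.2]
  exact Finset.mem_insert_self _ _

lemma IsFlip.removed_notMem (hf : IsFlip m T T' e e') : e ∉ T'.diagonals := by
  rw [hf.2.2, Finset.mem_insert, Finset.mem_erase]
  rintro (rfl | ⟨hne, -⟩)
  · exact hf.2.1 hf.1
  · exact hne rfl

lemma IsFlip.eq_new_of_mem (hf : IsFlip m T T' e e') {z : Finset (Fin m)}
    (hz' : z ∈ T'.diagonals) (hz : z ∉ T.diagonals) : z = e' := by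
  rw [hf.2.2, Finset.mem_insert] at hz'
  exact hz'.resolve_right fun h => hz (Finset.mem_of_mem_erase h)

lemma IsFlip.isSide_of_ne (hf : IsFlip m T T' e e') {s : Finset (Fin m)} (hs : IsSide m T s)
    (hne : s ≠ e) : IsSide m T' s :=
  hs.imp id fun h => hf.mem_of_ne h hne

lemma IsFlip.cross_s12 (hf : IsFlip m T T' e e') : Cross m e' e := by
  by_contra hnc
  refine hf.2.1 (T.maximal e' (T'.isDiagonal e' hf.new_mem) fun z hz hcross => ?_)
  by_cases hze : z = e
  · exact hnc (hze ▸ hcross)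
  · exact T'.noncross e' hf.new_mem z (hf.mem_of_ne hz hze) hcross

lemma IsFlip.exists_quad {a b : Fin m} (hf : IsFlip m T T' {a, b} e') :
    ∃ c u, CycBtw m a c b ∧ CycBtw m b u a ∧ e' = {c, u} ∧
      IsSide m T {a, c} ∧ IsSide m T {c, b} ∧ IsSide m T {b, u} ∧ IsSide m T {u, a} := by
  obtain ⟨c, hc, hac, hcb⟩ := T.exists_apex hf.1
  obtain ⟨u, hu, hbu, hua⟩ := T.exists_apex (Finset.pair_comm a b ▸ hf.1)
  obtain ⟨p, q, rfl, hp, hq⟩ := exists_eq_pair_of_cross hf.cross_s12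
  have hc' := cycBtw_iff.1 hc
  have hu' := cycBtw_iff.1 hu
  have hpc : p = c := eq_apex_of_isSide hc
    (hf.isSide_of_ne hac (by rw [Ne, Finset.pair_eq_pair_iff]; omega))
    (hf.isSide_of_ne hcb (by rw [Ne, Finset.pair_eq_pair_iff]; omega)) (Or.inr hf.new_mem) hp hq
  have hqu : q = u := eq_apex_of_isSide hu
    (hf.isSide_of_ne hbu (by rw [Ne, Finset.pair_eq_pair_iff]; omega))
    (hf.isSide_of_ne hua (by rw [Ne, Finset.pair_eq_pair_iff]; omega))
    (Or.inr (Finset.pair_comm p q ▸ hf.new_mem)) hq hp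
  subst hpc hqu
  exact ⟨p, q, hc, hu, rfl, hac, hcb, hbu, hua⟩

lemma IsFlip.exists_cross_neighbor (hf : IsFlip m T T' e e') {g : Finset (Fin m)}
    (hg : g ∉ T.diagonals) (hcross : Cross m g e') :
    ∃ z ∈ T.diagonals, Cross m g z ∧ Neighbor m T z e := by
  obtain ⟨a, b, -, -, rfl⟩ := T.isDiagonal e hf.1
  obtain ⟨c, u, hc, hu, rfl, hac, hcb, hbu, hua⟩ := hf.exists_quad
  obtain ⟨p, s, rfl, hp, hs⟩ := exists_eq_pair_of_cross hcross
  have of_side : ∀ x z, IsTriangle m T {a, b, x} → z ⊆ {a, b, x} → IsSide m T z →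
      Cross m {p, s} z → ∃ z ∈ T.diagonals, Cross m {p, s} z ∧ Neighbor m T z {a, b} :=
    fun x z ht hzt hz hcr => ⟨z, hz.mem_diagonals_of_cross hcr, hcr,
      hz.mem_diagonals_of_cross hcr, hf.1, _, ht, hzt, by simp⟩
  -- `{p, s}` crosses a side of the quadrilateral `a c b u`, and these are neighbors of `{a, b}`.
  rw [cycBtw_iff] at hc hu hp hs
  have tri_c : IsTriangle m T {a, b, c} := ⟨a, b, c, by omega, by omega, by omega, rfl,
    Or.inr hf.1, hac, Finset.pair_comm c b ▸ hcb⟩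
  have tri_u : IsTriangle m T {a, b, u} := ⟨a, b, u, by omega, by omega, by omega, rfl,
    Or.inr hf.1, Finset.pair_comm u a ▸ hua, hbu⟩
  have hs' : s = a ∨ CycBtw m a s c ∨ CycBtw m u s a := by
    simp only [cycBtw_iff]
    omega
  rcases hs' with rfl | hs' | hs'
  · have hpb : p ≠ b := by
      rintro rfl
      exact hg (by rw [Finset.pair_comm]; exact hf.1)
    have hp' : CycBtw m c p b ∨ CycBtw m b p u := by
      simp only [cycBtw_iff]
      omega
    rcases hp' with hp' | hp'
    · refine of_side c {c, b} tri_c (by simp [Finset.insert_subset_iff]) hcb ?_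
      simp only [cross_pair_iff, cycBtw_iff] at hp' ⊢
      omega
    · refine of_side u {b, u} tri_u (by simp) hbu ?_
      simp only [cross_pair_iff, cycBtw_iff] at hp' ⊢
      omega
  · refine of_side c {a, c} tri_c (by simp) hac ?_
    simp only [cross_pair_iff, cycBtw_iff] at hs' ⊢
    omega
  · refine of_side u {u, a} tri_u (by simp [Finset.insert_subset_iff]) hua ?_
    simp only [cross_pair_iff, cycBtw_iff] at hs' ⊢
    omega

lemma IsFlip.neighbor_of_apex {p q : Fin m} (hf : IsFlip m T T' {p, q} e') {r x : Fin m}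
    (hr : CycBtw m p r q) (hpr : IsSide m T {p, r}) (hqr : IsSide m T {q, r})
    (hx : x = p ∨ x = q) (hxr : {x, r} ∈ T.diagonals) : Neighbor m T' e' {x, r} := by
  obtain ⟨c, u, hc, hu, rfl, -, -, hqu, hup⟩ := hf.exists_quad
  have hr' := cycBtw_iff.1 hr
  have hcr : c = r := eq_apex_of_isSide hr
    (hf.isSide_of_ne hpr (by rw [Ne, Finset.pair_eq_pair_iff]; omega))
    (hf.isSide_of_ne (Finset.pair_comm q r ▸ hqr) (by rw [Ne, Finset.pair_eq_pair_iff]; omega))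
    (Or.inr hf.new_mem) hc hu
  subst hcr
  rw [cycBtw_iff] at hu
  have hxc : {x, c} ∈ T'.diagonals :=
    hf.mem_of_ne hxr (by rw [Ne, Finset.pair_eq_pair_iff]; omega)
  have hxu : IsSide m T' {x, u} := by
    refine hf.isSide_of_ne ?_ (by rw [Ne, Finset.pair_eq_pair_iff]; omega)
    rcases hx with rfl | rfl
    · exact Finset.pair_comm u x ▸ hup
    · exact hqu
  exact ⟨hf.new_mem, hxc, {x, c, u}, ⟨x, c, u, by omega, by omega, by omega, rfl, Or.inr hxc,
    hxu, Or.inr hf.new_mem⟩, by simp, by simp⟩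

lemma IsFlip.neighbor_of_not_neighbor (hf : IsFlip m T T' e e') {f g : Finset (Fin m)}
    (hfg : Neighbor m T f g) (hge : g ≠ e) (hfg' : ¬ Neighbor m T' f g) :
    Neighbor m T f e ∧ Neighbor m T' e' g := by
  obtain ⟨hfT, hgT, t, ht, hft, hgt⟩ := hfg
  have het : e ⊆ t := by
    by_contra het
    have hne : ∀ s ⊆ t, s ≠ e := fun s hs h => het (h ▸ hs)
    refine hfg' ⟨hf.mem_of_ne hfT (hne _ hft), hf.mem_of_ne hgT hge, t, ?_, hft, hgt⟩
    obtain ⟨A, B, C, hAB, hAC, hBC, rfl, sAB, sAC, sBC⟩ := ht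
    exact ⟨A, B, C, hAB, hAC, hBC, rfl,
      hf.isSide_of_ne sAB (hne _ (by simp)),
      hf.isSide_of_ne sAC (hne _ (by simp)),
      hf.isSide_of_ne sBC (hne _ (by simp))⟩
  refine ⟨⟨hfT, hf.1, t, ht, hft, het⟩, ?_⟩
  obtain ⟨p, q, hpq, -, rfl⟩ := T.isDiagonal e hf.1
  obtain ⟨r, hrp, hrq, rfl, hpr, hqr⟩ := ht.exists_third hpq het
  obtain ⟨x, y, hxy, -, rfl⟩ := T.isDiagonal g hgT
  obtain ⟨v, hv, hg⟩ := exists_eq_pair_of_subset_triple hxy hgt hge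
  rw [hg] at hgT ⊢
  have hr : CycBtw m p r q ∨ CycBtw m q r p := by
    simp only [cycBtw_iff]
    omega
  rcases hr with hr | hr
  · exact hf.neighbor_of_apex hr hpr hqr hv hgT
  · exact (Finset.pair_comm p q ▸ hf).neighbor_of_apex hr hqr hpr hv.symm hgT

end Flip

section FlipSeq

variable {r : ℕ} {F : ℕ → Finset (Fin m) × Finset (Fin m)} {Ts : ℕ → Triangulation m}

lemma IsFlipSeq.arc_of_created_eq_removed (hseq : IsFlipSeq m r F Ts) {i j : ℕ} (hij : i < j)
    (hjr : j < r) (h : (F i).2 = (F j).1) : Arc m r F Ts i j :=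
  ⟨hij, hjr, by rw [h]; exact (Ts j).neighbor_self (hseq j hjr).1⟩

lemma IsFlipSeq.exists_reachable_creator_of_cross (hseq : IsFlipSeq m r F Ts) {a L : ℕ}
    {g : Finset (Fin m)} (hga : (F a).1 = g) (hLr : L ≤ r)
    (hgone : ∀ l, a < l → l ≤ L → g ∉ (Ts l).diagonals) {l : ℕ} (hal : a < l)
    (hlL : l ≤ L)
    {z : Finset (Fin m)} (hz : z ∈ (Ts l).diagonals) (hgz : Cross m g z) :
    ∃ b, a ≤ b ∧ b < l ∧ (F b).2 = z ∧ Relation.ReflTransGen (Arc m r F Ts) a b := by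
  induction l, hal using Nat.le_induction generalizing z with
  | base =>
    have hf := hseq a (by omega)
    refine ⟨a, le_rfl, a.lt_succ_self, (hf.eq_new_of_mem hz fun hz' => ?_).symm, .refl⟩
    exact (Ts a).noncross g (hga ▸ hf.1) z hz' hgz
  | succ l hal ih =>
    have hf := hseq l (by omega)
    by_cases hzl : z ∈ (Ts l).diagonals
    · obtain ⟨b, hab, hbl, hFb, hpath⟩ := ih (by omega) hzl hgz
      exact ⟨b, hab, by omega, hFb, hpath⟩
    obtain rfl := hf.eq_new_of_mem hz hzl
    obtain ⟨z', hz', hgz', hnb⟩ := hf.exists_cross_neighbor (hgone l hal (by omega)) hgz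
    obtain ⟨b, hab, hbl, hFb, hpath⟩ := ih (by omega) hz' hgz'
    exact ⟨l, by omega, l.lt_succ_self, rfl, hpath.tail ⟨hbl, by omega, hFb ▸ hnb⟩⟩

lemma IsFlipSeq.exists_path_to_recreation (hseq : IsFlipSeq m r F Ts) {a L : ℕ}
    {g : Finset (Fin m)} (hga : (F a).1 = g) (haL : a < L) (hLr : L ≤ r)
    (hgL : g ∈ (Ts L).diagonals) :
    ∃ k, a < k ∧ k < L ∧ (F k).2 = g ∧ Relation.TransGen (Arc m r F Ts) a k := by
  classical
  have hex : ∃ n, a < n ∧ g ∈ (Ts n).diagonals := ⟨L, haL, hgL⟩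
  obtain ⟨n, ⟨han, hgn⟩, hmin⟩ : ∃ n, (a < n ∧ g ∈ (Ts n).diagonals) ∧
      ∀ l < n, ¬ (a < l ∧ g ∈ (Ts l).diagonals) :=
    ⟨Nat.find hex, Nat.find_spec hex, fun l => Nat.find_min hex⟩
  have hnL : n ≤ L := not_lt.1 fun h => hmin L h ⟨haL, hgL⟩
  obtain ⟨k, rfl⟩ : ∃ k, n = k + 1 := ⟨n - 1, by omega⟩
  have hak : a < k := by
    refine lt_of_le_of_ne (by omega) fun hak => ?_
    subst hak
    exact (hseq a (by omega)).removed_notMem (hga ▸ hgn)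
  have hf := hseq k (by omega)
  have hFk : (F k).2 = g := (hf.eq_new_of_mem hgn fun h => hmin k k.lt_succ_self ⟨hak, h⟩).symm
  obtain ⟨b, -, hbk, hFb, hpath⟩ := hseq.exists_reachable_creator_of_cross hga (by omega)
    (fun l hal hlk hl => hmin l (by omega) ⟨hal, hl⟩) hak le_rfl hf.1 (hFk ▸ hf.cross_s12)
  exact ⟨k, hak, by omega, hFk,
    .tail' hpath (hseq.arc_of_created_eq_removed hbk (by omega) hFb)⟩

end FlipSeq

end

theorem arc_path_of_neighbor_general (m : ℕ)
    (r : ℕ) (F : ℕ → Finset (Fin m) × Finset (Fin m)) (Ts : ℕ → Triangulation m)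
    (hseq : IsFlipSeq m r F Ts)
    (i j h : ℕ) (hij : i < j) (hjr : j < r) (hih : i < h) (hhj : h ≤ j)
    (hnb : Neighbor m (Ts h) (F i).2 (F j).1) :
    Relation.TransGen (Arc m r F Ts) i j := by
  obtain ⟨n, hn⟩ : ∃ n, j - h = n := ⟨_, rfl⟩
  induction n generalizing i h with
  | zero => exact .single ⟨hij, hjr, (by omega : h = j) ▸ hnb⟩
  | succ n ih =>
    have hf := hseq h (by omega)
    by_cases hkeep : Neighbor m (Ts (h + 1)) (F i).2 (F j).1
    · exact ih i (h + 1) hij (by omega) (by omega) hkeep (by omega)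
    by_cases hrem : (F j).1 = (F h).1
    · obtain ⟨k, -, hkj, hFk, hpath⟩ :=
        hseq.exists_path_to_recreation hrem.symm (by omega : h < j) hjr.le (hseq j hjr).1
      exact .head ⟨hih, by omega, hrem ▸ hnb⟩
        (hpath.tail (hseq.arc_of_created_eq_removed hkj hjr hFk))
    · obtain ⟨hnb₁, hnb₂⟩ := hf.neighbor_of_not_neighbor hnb hrem hkeep
      exact .head ⟨hih, by omega, hnb₁⟩
        (ih h (h + 1) (by omega) (by omega) (by omega) hnb₂ (by omega))

/-- Let `F` be a flip sequence transforming `Ts 0` into `Ts r` (the `i`-th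
flip, `0`-indexed, is performed in `Ts i` and yields `Ts (i+1)`). Suppose that
for some flip indices `i < j < r` and some `h` with `i < h ≤ j` (so that
`Ts h` is one of the triangulations containing the diagonal created by flip
`i`, strictly between its creation and flip `j`), the diagonal `(F i).2`
created by flip `i` is a neighbor of the diagonal `(F j).1` removed by flip
`j` in the triangulation `Ts h`. Then there is a directed path from flip `i`
to flip `j` in the DAG `D_F`. -/
theorem arc_path_of_neighbor (m : ℕ) (hm : 3 ≤ m)
    (r : ℕ) (F : ℕ → Finset (Fin m) × Finset (Fin m)) (Ts : ℕ → Triangulation m)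
    (hseq : IsFlipSeq m r F Ts)
    (i j h : ℕ) (hij : i < j) (hjr : j < r) (hih : i < h) (hhj : h ≤ j)
    (hnb : Neighbor m (Ts h) (F i).2 (F j).1) :
    Relation.TransGen (Arc m r F Ts) i j :=
  arc_path_of_neighbor_general m r F Ts hseq i j h hij hjr hih hhj hnb
end
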